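/- Let R be a commutative ring such that the zero-divisor graph Γ(R) has diameter 3, i.e., there exist zero-divisors a, b with no path of length ≤ 2 between them. Then the annihilating-ideal graph AG(R) also has diameter 3: there exist distinct nonzero annihilating-ideals I, J with IJ ≠ (0) and no nonzero ideal K with KI = KJ = (0). -/

import Mathlib

/-!
The principal ideals `(a)` and `(b)` witness diameter `3` in `AG(R)`: a nonzero ideal kills both
of them exactly when some nonzero element kills both `a` and `b`. In particular `(a) ≠ (b)`,
since otherwise the annihilator of `(a)` would be such an ideal.
-/

namespace Ideal

variable {R : Type*} [CommSemiring R]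

theorem mul_span_singleton_eq_bot_iff {K : Ideal R} {a : R} :
    K * span {a} = ⊥ ↔ ∀ c ∈ K, c * a = 0 := by
  rw [← smul_eq_mul, ← Submodule.le_annihilator_iff]
  simp only [SetLike.le_def, Submodule.mem_annihilator_span_singleton, smul_eq_mul]

theorem annihilator_span_singleton_ne_bot_iff {a : R} :
    (span {a}).annihilator ≠ ⊥ ↔ ∃ s, s ≠ 0 ∧ a * s = 0 := by
  simp only [Submodule.ne_bot_iff, Submodule.mem_annihilator_span_singleton, smul_eq_mul,
    mul_comm _ a]
  exact ⟨fun ⟨s, hs, hs0⟩ => ⟨s, hs0, hs⟩, fun ⟨s, hs0, hs⟩ => ⟨s, hs, hs0⟩⟩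

theorem exists_ne_bot_mul_span_singleton_eq_bot_iff {a b : R} :
    (∃ K : Ideal R, K ≠ ⊥ ∧ K * span {a} = ⊥ ∧ K * span {b} = ⊥) ↔
      ∃ c, c ≠ 0 ∧ c * a = 0 ∧ c * b = 0 := by
  simp only [mul_span_singleton_eq_bot_iff]
  constructor
  · rintro ⟨K, hK, hKa, hKb⟩
    obtain ⟨c, hcK, hc⟩ := Submodule.exists_mem_ne_zero_of_ne_bot hK
    exact ⟨c, hc, hKa c hcK, hKb c hcK⟩
  · rintro ⟨c, hc, hca, hcb⟩
    refine ⟨span {c}, span_singleton_eq_bot.not.mpr hc, ?_, ?_⟩ <;>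
    · intro x hx
      obtain ⟨r, rfl⟩ := mem_span_singleton'.mp hx
      simp [mul_assoc, hca, hcb]

end Ideal

theorem AG_diam_three_of_Gamma_diam_three {R : Type*} [CommRing R]
    (h : ∃ a b : R, a ≠ 0 ∧ b ≠ 0 ∧ a ≠ b ∧
      (∃ s : R, s ≠ 0 ∧ a * s = 0) ∧ (∃ s : R, s ≠ 0 ∧ b * s = 0) ∧
      a * b ≠ 0 ∧ ¬ ∃ c : R, c ≠ 0 ∧ c * a = 0 ∧ c * b = 0) :
    ∃ I J : Ideal R, I ≠ ⊥ ∧ J ≠ ⊥ ∧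
      Submodule.annihilator I ≠ ⊥ ∧ Submodule.annihilator J ≠ ⊥ ∧ I ≠ J ∧
      I * J ≠ ⊥ ∧ ¬ ∃ K : Ideal R, K ≠ ⊥ ∧ K * I = ⊥ ∧ K * J = ⊥ := by
  obtain ⟨a, b, ha, hb, -, hza, hzb, hab, hno⟩ := h
  have hann_a := Ideal.annihilator_span_singleton_ne_bot_iff.mpr hza
  have hno' := mt Ideal.exists_ne_bot_mul_span_singleton_eq_bot_iff.mp hno
  refine ⟨Ideal.span {a}, Ideal.span {b}, Ideal.span_singleton_eq_bot.not.mpr ha,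
    Ideal.span_singleton_eq_bot.not.mpr hb, hann_a,
    Ideal.annihilator_span_singleton_ne_bot_iff.mpr hzb, ?_, ?_, hno'⟩
  · intro heq
    exact hno' ⟨_, hann_a, Submodule.annihilator_mul _, heq ▸ Submodule.annihilator_mul _⟩
  · rwa [Ideal.span_singleton_mul_span_singleton, Ne, Ideal.span_singleton_eq_bot]
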